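/- Consider a two-phase three-state quantum walk with finitely many defects and λ ∈ [0,2π) with e^{iλ} ≠ a_x^{(2,2)} and A_x(λ) ≠ 0 for all x ∈ ℤ. If e^{iλ} is an eigenvalue of U, then its eigenspace ker(U − e^{iλ}) is one-dimensional. -/

import Mathlib

open Complex Matrix ComplexConjugate

noncomputable section

/-- `Ψ` belongs to the kernel of `U − μ` for the three-state quantum walk `U = SC`
with coins `a x`: it is square summable and satisfies `UΨ = μΨ` componentwise. -/
def QWKerMem (a : ℤ → Matrix (Fin 3) (Fin 3) ℂ) (μ : ℂ) (Ψ : ℤ → Fin 3 → ℂ) : Prop :=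
  Summable (fun x : ℤ => ∑ i, ‖Ψ x i‖ ^ 2) ∧
    ∀ x : ℤ,
      μ * Ψ x 0 = ∑ j, a (x + 1) 0 j * Ψ (x + 1) j ∧
      μ * Ψ x 1 = ∑ j, a x 1 j * Ψ x j ∧
      μ * Ψ x 2 = ∑ j, a (x - 1) 2 j * Ψ (x - 1) j

/-- `μ` is an eigenvalue of the time-evolution operator `U = SC`. -/
def IsQWEigenvalue (a : ℤ → Matrix (Fin 3) (Fin 3) ℂ) (μ : ℂ) : Prop :=
  ∃ Ψ : ℤ → Fin 3 → ℂ, Ψ ≠ 0 ∧ QWKerMem a μ Ψ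

/-- `A(λ)` for a 3×3 coin matrix `M`. -/
def coefA (M : Matrix (Fin 3) (Fin 3) ℂ) (lam : ℝ) : ℂ :=
  M 0 0 + M 0 1 * M 1 0 / (Complex.exp (lam * Complex.I) - M 1 1)

/-!
Writing `μ = e^{iλ}`, the eigen-equations say `C_x Ψ(x) = μ (Ψ₁(x-1), Ψ₂(x), Ψ₃(x+1))`, and
unitarity of `C_x` turns this into a local conservation law: the flux
`|Ψ₁(x)|² - |Ψ₃(x+1)|²` is independent of `x`, and square summability forces it to vanish.
So `Ψ₁(x) = 0` iff `Ψ₃(x+1) = 0`. Solving the eigen-equations for `Ψ₁(x+1)` and `Ψ₃(x)` needs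
`A_x(λ) ≠ 0` and its analogue for the third state, which unitarity of `C_x` provides; hence a
single zero `Ψ₁(x₀) = 0` propagates to `Ψ = 0`. An eigenvector is therefore determined by
`Ψ₁(0)`, and any two are proportional. (Components are indexed by `Fin 3`: `Ψ₁(x)` is `Ψ x 0`.)
-/

open Filter Topology

theorem Int.forall_of_iff_add_one {P : ℤ → Prop} (h : ∀ x, P x ↔ P (x + 1)) {x₀ : ℤ}
    (h₀ : P x₀) (x : ℤ) : P x := by
  induction x using Int.inductionOn' (b := x₀) with
  | zero => exact h₀
  | succ k _ hk => exact (h k).1 hk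
  | pred k _ hk => exact (h (k - 1)).2 (by rwa [sub_add_cancel])

theorem Int.eq_of_tendsto_cofinite_of_apply_add_one {α : Type*} [TopologicalSpace α]
    [T2Space α] {f : ℤ → α} {l : α} (hf : ∀ x, f (x + 1) = f x)
    (hl : Tendsto f cofinite (𝓝 l)) (x : ℤ) : f x = l := by
  have hconst : f = fun _ => f 0 :=
    funext (Int.forall_of_iff_add_one (fun x => by rw [hf]) (x₀ := 0) rfl)
  rw [hconst] at hl ⊢
  exact tendsto_nhds_unique tendsto_const_nhds hl

theorem Matrix.sum_norm_sq_mulVec_of_mem_unitaryGroup {𝕜 n : Type*} [RCLike 𝕜] [Fintype n]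
    [DecidableEq n] {M : Matrix n n 𝕜} (hM : M ∈ unitaryGroup n 𝕜) (v : n → 𝕜) :
    ∑ i, ‖(M *ᵥ v) i‖ ^ 2 = ∑ i, ‖v i‖ ^ 2 := by
  have hdot : ∀ w : n → 𝕜, star w ⬝ᵥ w = ((∑ i, ‖w i‖ ^ 2 : ℝ) : 𝕜) := fun w => by
    simp only [dotProduct, Pi.star_apply, RCLike.star_def, RCLike.conj_mul]
    push_cast
    rfl
  have key : star (M *ᵥ v) ⬝ᵥ (M *ᵥ v) = star v ⬝ᵥ v := by
    rw [star_mulVec, dotProduct_mulVec, vecMul_vecMul, ← star_eq_conjTranspose,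
      mem_unitaryGroup_iff'.mp hM, vecMul_one]
  rw [hdot, hdot] at key
  exact_mod_cast key

theorem summable_sum_norm_sq_iff_memℓp {𝕜 α ι : Type*} [RCLike 𝕜] [Fintype ι]
    (Θ : α → ι → 𝕜) :
    Summable (fun x => ∑ i, ‖Θ x i‖ ^ 2) ↔
      Memℓp (fun x => (WithLp.toLp 2 (Θ x) : EuclideanSpace 𝕜 ι)) 2 := by
  rw [memℓp_gen_iff (by norm_num)]
  simp only [ENNReal.toReal_ofNat, Real.rpow_two, EuclideanSpace.norm_sq_eq]

/-- `coefANum M μ = (μ - M 1 1) * coefA M λ` for `μ = e^{iλ}`; `coefBNum` is the same expression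
with the first and third states exchanged. -/
def coefANum (M : Matrix (Fin 3) (Fin 3) ℂ) (μ : ℂ) : ℂ :=
  M 0 0 * (μ - M 1 1) + M 0 1 * M 1 0

def coefBNum (M : Matrix (Fin 3) (Fin 3) ℂ) (μ : ℂ) : ℂ :=
  M 2 2 * (μ - M 1 1) + M 2 1 * M 1 2

theorem coefA_mul_sub {M : Matrix (Fin 3) (Fin 3) ℂ} {lam : ℝ}
    (h : Complex.exp (lam * Complex.I) ≠ M 1 1) :
    coefA M lam * (Complex.exp (lam * Complex.I) - M 1 1) =
      coefANum M (Complex.exp (lam * Complex.I)) := by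
  rw [coefA, coefANum, add_mul, div_mul_cancel₀ _ (sub_ne_zero.2 h)]

theorem Matrix.adjugate_eq_det_smul_star_of_mem_unitaryGroup {n : Type*} [Fintype n]
    [DecidableEq n] {M : Matrix n n ℂ} (hM : M ∈ unitaryGroup n ℂ) :
    M.adjugate = M.det • star M := by
  calc M.adjugate = M.adjugate * M * star M := by
        rw [mul_assoc, mem_unitaryGroup_iff.mp hM, mul_one]
    _ = M.det • star M := by rw [adjugate_mul, smul_mul, one_mul]

theorem coefANum_eq_neg_mul_conj_coefBNum {M : Matrix (Fin 3) (Fin 3) ℂ}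
    (hM : M ∈ unitaryGroup (Fin 3) ℂ) {μ : ℂ} (hμ : ‖μ‖ = 1) :
    coefANum M μ = -(μ * M.det * conj (coefBNum M μ)) := by
  have hadj := adjugate_eq_det_smul_star_of_mem_unitaryGroup hM
  have cof : ∀ i : Fin 3, M.adjugate i i = M.det * conj (M i i) := fun i => by
    rw [hadj]; simp [star_eq_conjTranspose]
  have cof₀ := cof 0
  have cof₂ := cof 2
  simp only [adjugate_fin_three, of_apply, cons_val', cons_val_zero, cons_val_two,
    empty_val', cons_val_fin_one, Nat.succ_eq_add_one, Nat.reduceAdd, tail_cons,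
    vecHead] at cof₀ cof₂
  have cof₀' := congrArg conj cof₀
  simp only [map_sub, map_mul, conj_conj] at cof₀'
  have hdet : M.det * conj M.det = 1 := Unitary.mul_star_self_of_mem (det_of_mem_unitary hM)
  have hμ' : μ * conj μ = 1 := by simp [Complex.mul_conj, Complex.normSq_eq_norm_sq, hμ]
  simp only [coefANum, coefBNum, map_add, map_mul, map_sub]
  linear_combination (-1 : ℂ) * cof₂ - μ * M.det * cof₀' + M.det * conj (M 2 2) * hμ'
    - μ * M 0 0 * hdet

namespace QWKerMem

variable {a : ℤ → Matrix (Fin 3) (Fin 3) ℂ} {μ : ℂ} {Ψ : ℤ → Fin 3 → ℂ}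

theorem sub_smul {Φ : ℤ → Fin 3 → ℂ} (hΦ : QWKerMem a μ Φ) (hΨ : QWKerMem a μ Ψ) (c : ℂ) :
    QWKerMem a μ (Φ - c • Ψ) := by
  have hlin : (fun x => (WithLp.toLp 2 ((Φ - c • Ψ) x) : EuclideanSpace ℂ (Fin 3))) =
      (fun x => WithLp.toLp 2 (Φ x)) - c • fun x => WithLp.toLp 2 (Ψ x) := by
    funext x
    rfl
  refine ⟨(summable_sum_norm_sq_iff_memℓp _).2 ?_, fun x => ?_⟩
  · rw [hlin]
    exact ((summable_sum_norm_sq_iff_memℓp Φ).1 hΦ.1).sub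
      (((summable_sum_norm_sq_iff_memℓp Ψ).1 hΨ.1).const_smul c)
  · obtain ⟨f₀, f₁, f₂⟩ := hΦ.2 x
    obtain ⟨g₀, g₁, g₂⟩ := hΨ.2 x
    simp only [Fin.sum_univ_three, Pi.sub_apply, Pi.smul_apply, smul_eq_mul] at f₀ f₁ f₂ g₀ g₁ g₂ ⊢
    exact ⟨by linear_combination f₀ - c * g₀, by linear_combination f₁ - c * g₁,
      by linear_combination f₂ - c * g₂⟩

theorem summable_norm_sq (h : QWKerMem a μ Ψ) (i : Fin 3) :
    Summable fun x => ‖Ψ x i‖ ^ 2 :=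
  h.1.of_nonneg_of_le (fun _ => sq_nonneg _) fun x =>
    Finset.single_le_sum (f := fun j => ‖Ψ x j‖ ^ 2) (fun _ _ => sq_nonneg _)
      (Finset.mem_univ i)

theorem mulVec_eq (h : QWKerMem a μ Ψ) (x : ℤ) :
    a x *ᵥ Ψ x = μ • ![Ψ (x - 1) 0, Ψ x 1, Ψ (x + 1) 2] := by
  have e₀ := (h.2 (x - 1)).1
  have e₁ := (h.2 x).2.1
  have e₂ := (h.2 (x + 1)).2.2
  rw [sub_add_cancel] at e₀
  rw [add_sub_cancel_right] at e₂
  ext i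
  fin_cases i <;> simp [mulVec, dotProduct, e₀, e₁, e₂]

theorem norm_sq_conservation (hunit : ∀ x, a x ∈ unitaryGroup (Fin 3) ℂ) (hμ : ‖μ‖ = 1)
    (h : QWKerMem a μ Ψ) (x : ℤ) :
    ‖Ψ (x - 1) 0‖ ^ 2 + ‖Ψ x 1‖ ^ 2 + ‖Ψ (x + 1) 2‖ ^ 2 = ∑ i, ‖Ψ x i‖ ^ 2 := by
  rw [← sum_norm_sq_mulVec_of_mem_unitaryGroup (hunit x), h.mulVec_eq x, Fin.sum_univ_three]
  simp [hμ]

theorem norm_sq_apply_zero_eq (hunit : ∀ x, a x ∈ unitaryGroup (Fin 3) ℂ) (hμ : ‖μ‖ = 1)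
    (h : QWKerMem a μ Ψ) (x : ℤ) : ‖Ψ x 0‖ ^ 2 = ‖Ψ (x + 1) 2‖ ^ 2 := by
  have hflux : ∀ y, ‖Ψ (y + 1) 0‖ ^ 2 - ‖Ψ (y + 1 + 1) 2‖ ^ 2 =
      ‖Ψ y 0‖ ^ 2 - ‖Ψ (y + 1) 2‖ ^ 2 := fun y => by
    have := h.norm_sq_conservation hunit hμ (y + 1)
    rw [add_sub_cancel_right, Fin.sum_univ_three] at this
    linarith
  have hdecay : Tendsto (fun y => ‖Ψ y 0‖ ^ 2 - ‖Ψ (y + 1) 2‖ ^ 2) cofinite (𝓝 0) := by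
    simpa using (h.summable_norm_sq 0).tendsto_cofinite_zero.sub
      ((h.summable_norm_sq 2).tendsto_cofinite_zero.comp
        (add_left_injective (1 : ℤ)).tendsto_cofinite)
  linarith [Int.eq_of_tendsto_cofinite_of_apply_add_one hflux hdecay x]

theorem apply_zero_eq_zero_iff (hunit : ∀ x, a x ∈ unitaryGroup (Fin 3) ℂ) (hμ : ‖μ‖ = 1)
    (h : QWKerMem a μ Ψ) (x : ℤ) : Ψ x 0 = 0 ↔ Ψ (x + 1) 2 = 0 := by
  rw [← norm_eq_zero, ← sq_eq_zero_iff, h.norm_sq_apply_zero_eq hunit hμ, sq_eq_zero_iff,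
    norm_eq_zero]

theorem coefANum_mul_apply_zero (h : QWKerMem a μ Ψ) (x : ℤ) :
    coefANum (a (x + 1)) μ * Ψ (x + 1) 0 = (μ - a (x + 1) 1 1) * μ * Ψ x 0 -
      ((μ - a (x + 1) 1 1) * a (x + 1) 0 2 + a (x + 1) 0 1 * a (x + 1) 1 2) * Ψ (x + 1) 2 := by
  have e₀ := (h.2 x).1
  have e₁ := (h.2 (x + 1)).2.1
  simp only [Fin.sum_univ_three] at e₀ e₁
  rw [coefANum]
  linear_combination (a (x + 1) 1 1 - μ) * e₀ - a (x + 1) 0 1 * e₁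

theorem coefBNum_mul_apply_two (h : QWKerMem a μ Ψ) (x : ℤ) :
    coefBNum (a x) μ * Ψ x 2 = (μ - a x 1 1) * μ * Ψ (x + 1) 2 -
      ((μ - a x 1 1) * a x 2 0 + a x 2 1 * a x 1 0) * Ψ x 0 := by
  have e₂ := (h.2 (x + 1)).2.2
  have e₁ := (h.2 x).2.1
  rw [add_sub_cancel_right] at e₂
  simp only [Fin.sum_univ_three] at e₁ e₂
  rw [coefBNum]
  linear_combination (a x 1 1 - μ) * e₂ - a x 2 1 * e₁

theorem eq_zero_of_apply_zero_eq_zero (hunit : ∀ x, a x ∈ unitaryGroup (Fin 3) ℂ)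
    (hμ : ‖μ‖ = 1) (hne : ∀ x, μ ≠ a x 1 1) (hA : ∀ x, coefANum (a x) μ ≠ 0)
    (h : QWKerMem a μ Ψ) (x₀ : ℤ) (h₀ : Ψ x₀ 0 = 0) : Ψ = 0 := by
  have hB : ∀ x, coefBNum (a x) μ ≠ 0 := fun x hB =>
    hA x (by rw [coefANum_eq_neg_mul_conj_coefBNum (hunit x) hμ, hB]; simp)
  have hflux := h.apply_zero_eq_zero_iff hunit hμ
  have hstep : ∀ x, Ψ x 0 = 0 ↔ Ψ (x + 1) 0 = 0 := fun x => by
    constructor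
    · intro hx
      have hA0 := h.coefANum_mul_apply_zero x
      rw [hx, (hflux x).1 hx, mul_zero, mul_zero, sub_zero] at hA0
      exact (mul_eq_zero.1 hA0).resolve_left (hA (x + 1))
    · intro hx
      have hB0 := h.coefBNum_mul_apply_two (x + 1)
      rw [hx, (hflux (x + 1)).1 hx, mul_zero, mul_zero, sub_zero] at hB0
      exact (hflux x).2 ((mul_eq_zero.1 hB0).resolve_left (hB (x + 1)))
  have h0 : ∀ x, Ψ x 0 = 0 := Int.forall_of_iff_add_one hstep h₀
  have h2 : ∀ x, Ψ x 2 = 0 := fun x => by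
    simpa using (hflux (x - 1)).1 (h0 (x - 1))
  have h1 : ∀ x, Ψ x 1 = 0 := fun x => by
    have e₁ := (h.2 x).2.1
    simp only [Fin.sum_univ_three, h0, h2, mul_zero, add_zero, zero_add] at e₁
    have : (μ - a x 1 1) * Ψ x 1 = 0 := by linear_combination e₁
    exact (mul_eq_zero.1 this).resolve_left (sub_ne_zero.2 (hne x))
  funext x i
  fin_cases i
  exacts [h0 x, h1 x, h2 x]

end QWKerMem

theorem two_phase_defects_eigenspace_one_dim_general (a : ℤ → Matrix (Fin 3) (Fin 3) ℂ)
    (hunit : ∀ x, a x ∈ Matrix.unitaryGroup (Fin 3) ℂ)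
    (lam : ℝ)
    (hne : ∀ x, Complex.exp (lam * Complex.I) ≠ a x 1 1)
    (hA : ∀ x, coefA (a x) lam ≠ 0)
    (heig : IsQWEigenvalue a (Complex.exp (lam * Complex.I))) :
    ∃ Ψ₀ : ℤ → Fin 3 → ℂ, Ψ₀ ≠ 0 ∧ QWKerMem a (Complex.exp (lam * Complex.I)) Ψ₀ ∧
      ∀ Φ : ℤ → Fin 3 → ℂ, QWKerMem a (Complex.exp (lam * Complex.I)) Φ →
        ∃ c : ℂ, Φ = c • Ψ₀ := by
  set μ := Complex.exp (lam * Complex.I)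
  obtain ⟨Ψ, hΨ, hker⟩ := heig
  have hAnum : ∀ x, coefANum (a x) μ ≠ 0 := fun x => by
    rw [← coefA_mul_sub (hne x)]
    exact mul_ne_zero (hA x) (sub_ne_zero.2 (hne x))
  have hvanish : ∀ Θ, QWKerMem a μ Θ → Θ 0 0 = 0 → Θ = 0 := fun Θ hΘ =>
    hΘ.eq_zero_of_apply_zero_eq_zero hunit (Complex.norm_exp_ofReal_mul_I lam) hne hAnum 0
  have hΨ₀ : Ψ 0 0 ≠ 0 := fun h => hΨ (hvanish Ψ hker h)
  refine ⟨Ψ, hΨ, hker, fun Φ hΦ => ⟨Φ 0 0 / Ψ 0 0, sub_eq_zero.1 ?_⟩⟩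
  refine hvanish _ (hΦ.sub_smul hker _) ?_
  simp [div_mul_cancel₀ _ hΨ₀]

/-- for a two-phase walk with finitely many defects (with
`e^{iλ} ≠ a_x^{(2,2)}` and `A_x(λ) ≠ 0` for all `x`), if `e^{iλ}` is an eigenvalue of
`U` then the eigenspace `ker (U − e^{iλ})` is one-dimensional: it is spanned by a
single nonzero vector. -/
theorem two_phase_defects_eigenspace_one_dim (a : ℤ → Matrix (Fin 3) (Fin 3) ℂ)
    (hunit : ∀ x, a x ∈ Matrix.unitaryGroup (Fin 3) ℂ)
    (h13 : ∀ x, ‖a x 0 2‖ ≠ 1) (h22 : ∀ x, ‖a x 1 1‖ ≠ 1) (h31 : ∀ x, ‖a x 2 0‖ ≠ 1)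
    (xp xm : ℤ) (hxp : 0 ≤ xp) (hxm : xm < 0)
    (Cp Cm : Matrix (Fin 3) (Fin 3) ℂ)
    (hCp : ∀ x, xp ≤ x → a x = Cp) (hCm : ∀ x, x < xm → a x = Cm)
    (lam : ℝ) (hlam : lam ∈ Set.Ico 0 (2 * Real.pi))
    (hne : ∀ x, Complex.exp (lam * Complex.I) ≠ a x 1 1)
    (hA : ∀ x, coefA (a x) lam ≠ 0)
    (heig : IsQWEigenvalue a (Complex.exp (lam * Complex.I))) :
    ∃ Ψ₀ : ℤ → Fin 3 → ℂ, Ψ₀ ≠ 0 ∧ QWKerMem a (Complex.exp (lam * Complex.I)) Ψ₀ ∧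
      ∀ Φ : ℤ → Fin 3 → ℂ, QWKerMem a (Complex.exp (lam * Complex.I)) Φ →
        ∃ c : ℂ, Φ = c • Ψ₀ :=
  two_phase_defects_eigenspace_one_dim_general a hunit lam hne hA heig
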